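/- arXiv:1510.02645 — 10 statements merged into one kernel-verified Lean document; each statement's English description precedes it below -/
import Mathlib

section
/- Let n ≥ 2. Every matrix A in GL₂(Z/2^n) with A ≠ I, A² = I, and both diagonal entries even is conjugate in GL₂(Z/2^n) to the matrix [[0,1],[1,0]]. -/
/-!
Since `ℤ/2ⁿ` is local with maximal ideal `(2)`, an invertible `[[a,c],[b,d]]` with `a` even must
have `c` a unit, because `ad - cb` is a unit. For an involution with `c` a unit, the matrix
`P = [[1,0],[a,c]]` is invertible, and the relations `a² + cb = 1`, `ac + cd = 0` coming from
`A² = 1` say exactly that `P A = [[0,1],[1,0]] P`.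
-/

theorem ZMod.isLocalRing_prime_pow {p n : ℕ} [Fact p.Prime] (hn : n ≠ 0) :
    IsLocalRing (ZMod (p ^ n)) :=
  have : Nontrivial (ZMod (p ^ n)) :=
    ZMod.nontrivial_iff.mpr (Nat.pow_eq_one.not.mpr (by simp [hn, Fact.out (p := p.Prime).ne_one]))
  .of_surjective' (PadicInt.toZModPow n) (ZMod.ringHom_surjective _)

theorem ZMod.not_isUnit_of_prime_dvd {p n : ℕ} (hp : p.Prime) (hn : n ≠ 0) {x : ZMod (p ^ n)}
    (hx : (p : ZMod (p ^ n)) ∣ x) : ¬IsUnit x := by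
  obtain ⟨r, rfl⟩ := hx
  exact fun hu => ZMod.prime_natCast_not_isUnit_pow hp (Nat.pos_of_ne_zero hn)
    (isUnit_of_mul_isUnit_left hu)

theorem Matrix.isUnit_apply_zero_one_of_not_isUnit_apply_zero_zero {R : Type*} [CommRing R]
    [IsLocalRing R] {B : Matrix (Fin 2) (Fin 2) R} (hB : IsUnit B.det) (ha : ¬IsUnit (B 0 0)) :
    IsUnit (B 0 1) := by
  rw [Matrix.det_fin_two, sub_eq_add_neg] at hB
  have had : ¬IsUnit (B 0 0 * B 1 1) := fun h => ha (isUnit_of_mul_isUnit_left h)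
  exact isUnit_of_mul_isUnit_left
    ((IsUnit.neg_iff _).mp ((IsLocalRing.isUnit_or_isUnit_of_isUnit_add hB).resolve_left had))

theorem Matrix.mul_eq_swap_mul_of_mul_self_eq_one {R : Type*} [CommRing R]
    {B : Matrix (Fin 2) (Fin 2) R} (hB : B * B = 1) :
    !![1, 0; B 0 0, B 0 1] * B = !![0, 1; 1, 0] * !![1, 0; B 0 0, B 0 1] := by
  have h00 : B 0 0 * B 0 0 + B 0 1 * B 1 0 = 1 := by
    simpa [Matrix.mul_apply] using congr_fun₂ hB 0 0
  have h01 : B 0 0 * B 0 1 + B 0 1 * B 1 1 = 0 := by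
    simpa [Matrix.mul_apply] using congr_fun₂ hB 0 1
  ext i j
  fin_cases i <;> fin_cases j <;> simp [Matrix.mul_apply, h00, h01]

theorem Matrix.GeneralLinearGroup.exists_conj_eq_swap_of_sq_eq_one {R : Type*} [CommRing R]
    (A : GL (Fin 2) R) (hA : A ^ 2 = 1) (hb : IsUnit ((A : Matrix (Fin 2) (Fin 2) R) 0 1)) :
    ∃ P : GL (Fin 2) R, ((P * A * P⁻¹ : GL (Fin 2) R) : Matrix (Fin 2) (Fin 2) R) =
      !![0, 1; 1, 0] := by
  set B : Matrix (Fin 2) (Fin 2) R := ↑A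
  have hB : B * B = 1 := by simpa [sq] using congrArg Units.val hA
  refine ⟨.mk'' !![1, 0; B 0 0, B 0 1] (by simpa using hb), ?_⟩
  rw [Units.val_mul, Units.val_mul, Units.mul_inv_eq_iff_eq_mul, val_mk'']
  exact Matrix.mul_eq_swap_mul_of_mul_self_eq_one hB

theorem involution_even_diagonal_conjugate_swap_general
    (n : ℕ) (hn : 2 ≤ n) (A : GL (Fin 2) (ZMod (2 ^ n)))
    (hA2 : A ^ 2 = 1)
    (hd0 : Even ((A : Matrix (Fin 2) (Fin 2) (ZMod (2 ^ n))) 0 0)) :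
    ∃ P : GL (Fin 2) (ZMod (2 ^ n)),
      ((P * A * P⁻¹ : GL (Fin 2) (ZMod (2 ^ n))) : Matrix (Fin 2) (Fin 2) (ZMod (2 ^ n))) =
        !![0, 1; 1, 0] := by
  have hn0 : n ≠ 0 := by omega
  have := ZMod.isLocalRing_prime_pow (p := 2) hn0
  have hdet : IsUnit (A : Matrix (Fin 2) (Fin 2) (ZMod (2 ^ n))).det :=
    (Matrix.isUnit_iff_isUnit_det _).mp A.isUnit
  have ha : ¬IsUnit ((A : Matrix (Fin 2) (Fin 2) (ZMod (2 ^ n))) 0 0) :=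
    ZMod.not_isUnit_of_prime_dvd Nat.prime_two hn0 (by exact_mod_cast even_iff_two_dvd.mp hd0)
  exact Matrix.GeneralLinearGroup.exists_conj_eq_swap_of_sq_eq_one A hA2
    (Matrix.isUnit_apply_zero_one_of_not_isUnit_apply_zero_zero hdet ha)

/-- Every involution in `GL₂(ℤ/2ⁿ)` (other than the identity) whose diagonal entries are both
even is conjugate to the swap matrix `[[0,1],[1,0]]`. -/
theorem involution_even_diagonal_conjugate_swap
    (n : ℕ) (hn : 2 ≤ n) (A : GL (Fin 2) (ZMod (2 ^ n)))
    (hA1 : A ≠ 1) (hA2 : A ^ 2 = 1)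
    (hd0 : Even ((A : Matrix (Fin 2) (Fin 2) (ZMod (2 ^ n))) 0 0))
    (hd1 : Even ((A : Matrix (Fin 2) (Fin 2) (ZMod (2 ^ n))) 1 1)) :
    ∃ P : GL (Fin 2) (ZMod (2 ^ n)),
      ((P * A * P⁻¹ : GL (Fin 2) (ZMod (2 ^ n))) : Matrix (Fin 2) (Fin 2) (ZMod (2 ^ n))) =
        !![0, 1; 1, 0] :=
  involution_even_diagonal_conjugate_swap_general n hn A hA2 hd0
end

section
/- Let n ≥ 2 and let A = [[a,c],[b,d]] ∈ GL₂(Z/2^n) with A² = I and a, d both odd with a + d = 2q for some odd q ∈ Z/2^n. Then b, c ∈ {0, 2^{n-1}} and a² = 1 in Z/2^n, so a ∈ {±1, ±1 + 2^{n-1}}. -/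
/-!
From `A² = I` one reads off `a² + bc = 1`, `b (a + d) = 0` and `c (a + d) = 0`. Since `2` is
nilpotent in `ℤ/2ⁿ`, odd elements are units, so `a + d = 2q` with `q` odd forces `2b = 2c = 0`,
i.e. `b, c ∈ {0, 2ⁿ⁻¹}`; as `(2ⁿ⁻¹)² = 0` for `n ≥ 2`, this gives `bc = 0` and `a² = 1`.
Finally, writing `a = 2u + 1`, one of `u`, `u + 1` is odd, hence a unit, and cancelling it from
`(a - 1)(a + 1) = 4u(u + 1) = 0` gives `2(a - 1) = 0` or `2(a + 1) = 0`.
-/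

theorem Matrix.fin_two_mul_self_eq_one {R : Type*} [CommRing R] {a b c d : R}
    (h : !![a, c; b, d] * !![a, c; b, d] = 1) :
    a * a + c * b = 1 ∧ b * (a + d) = 0 ∧ c * (a + d) = 0 := by
  rw [Matrix.mul_fin_two, Matrix.one_fin_two, ← Matrix.ext_iff] at h
  have h00 := h 0 0
  have h10 := h 1 0
  have h01 := h 0 1
  simp only [Matrix.of_apply, Matrix.cons_val', Matrix.cons_val_zero, Matrix.cons_val_one,
    Matrix.empty_val', Matrix.cons_val_fin_one] at h00 h10 h01
  exact ⟨h00, by linear_combination h10, by linear_combination h01⟩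

theorem Odd.isUnit_of_isNilpotent_two {R : Type*} [CommRing R] (h2 : IsNilpotent (2 : R))
    {q : R} (hq : Odd q) : IsUnit q := by
  obtain ⟨k, rfl⟩ := hq
  exact ((Commute.all _ _).isNilpotent_mul_right h2).isUnit_add_one

namespace ZMod

theorem even_or_odd {N : ℕ} (q : ZMod N) : Even q ∨ Odd q := by
  obtain ⟨x, rfl⟩ := intCast_surjective q
  exact (Int.even_or_odd x).imp (·.map (Int.castRingHom _)) (·.map (Int.castRingHom _))

theorem isNilpotent_two (n : ℕ) : IsNilpotent (2 : ZMod (2 ^ n)) :=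
  ⟨n, by exact_mod_cast natCast_self (2 ^ n)⟩

theorem eq_zero_or_eq_two_pow_of_two_mul_eq_zero {n : ℕ} (hn : n ≠ 0) {b : ZMod (2 ^ n)}
    (h : 2 * b = 0) : b = 0 ∨ b = ((2 ^ (n - 1) : ℕ) : ZMod (2 ^ n)) := by
  obtain ⟨m, rfl⟩ := Nat.exists_eq_succ_of_ne_zero hn
  obtain ⟨k, hk⟩ : 2 ^ m ∣ b.val := by
    rw [← Nat.mul_dvd_mul_iff_left two_pos, ← pow_succ', ← natCast_eq_zero_iff]
    push_cast [natCast_zmod_val]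
    exact h
  rw [Nat.succ_sub_one, ← natCast_zmod_val b]
  have hk2 : k < 2 := by
    have hlt := val_lt b
    rw [hk, pow_succ] at hlt
    exact Nat.lt_of_mul_lt_mul_left hlt
  interval_cases k <;> simp [hk]

theorem mul_eq_zero_of_two_mul_eq_zero {n : ℕ} (hn : 2 ≤ n) {b c : ZMod (2 ^ n)}
    (hb : 2 * b = 0) (hc : 2 * c = 0) : b * c = 0 := by
  rcases eq_zero_or_eq_two_pow_of_two_mul_eq_zero (by omega) hb with rfl | rfl
  · exact zero_mul c
  rcases eq_zero_or_eq_two_pow_of_two_mul_eq_zero (by omega) hc with rfl | rfl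
  · exact mul_zero _
  rw [← Nat.cast_mul, ← pow_add, natCast_eq_zero_iff]
  exact pow_dvd_pow 2 (by omega)

theorem two_mul_sub_one_eq_zero_or_two_mul_add_one_eq_zero {n : ℕ} {a : ZMod (2 ^ n)}
    (h : a ^ 2 = 1) : 2 * (a - 1) = 0 ∨ 2 * (a + 1) = 0 := by
  rcases subsingleton_or_nontrivial (ZMod (2 ^ n)) with _ | _
  · exact Or.inl (Subsingleton.elim _ _)
  have h2 := isNilpotent_two n
  have ha : ¬ Even a := fun ⟨r, hr⟩ ↦ (IsUnit.of_pow_eq_one h two_ne_zero).not_isNilpotent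
    (hr ▸ two_mul r ▸ (Commute.all _ _).isNilpotent_mul_right h2)
  obtain ⟨u, rfl⟩ := (even_or_odd a).resolve_left ha
  rcases even_or_odd u with ⟨r, rfl⟩ | hu
  · have hu : IsUnit (r + r + 1) := Odd.isUnit_of_isNilpotent_two h2 ⟨r, by ring⟩
    exact Or.inl (hu.mul_left_eq_zero.1 (by linear_combination h))
  · exact Or.inr ((hu.isUnit_of_isNilpotent_two h2).mul_left_eq_zero.1
      (by linear_combination h))

theorem eq_one_or_eq_neg_one_or_eq_add_two_pow_of_sq_eq_one {n : ℕ} (hn : n ≠ 0)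
    {a : ZMod (2 ^ n)} (h : a ^ 2 = 1) :
    a = 1 ∨ a = -1 ∨ a = 1 + (2 ^ (n - 1) : ℕ) ∨ a = -1 + (2 ^ (n - 1) : ℕ) := by
  rcases two_mul_sub_one_eq_zero_or_two_mul_add_one_eq_zero h with h | h <;>
    rcases eq_zero_or_eq_two_pow_of_two_mul_eq_zero hn h with h | h
  · exact Or.inl (sub_eq_zero.1 h)
  · exact Or.inr (Or.inr (Or.inl (by linear_combination h)))
  · exact Or.inr (Or.inl (by linear_combination h))
  · exact Or.inr (Or.inr (Or.inr (by linear_combination h)))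

end ZMod

theorem involution_odd_diagonal_sum_twice_odd_general
    (n : ℕ) (hn : 2 ≤ n) (A : GL (Fin 2) (ZMod (2 ^ n))) (hA2 : A ^ 2 = 1)
    (a b c d : ZMod (2 ^ n))
    (hm : (A : Matrix (Fin 2) (Fin 2) (ZMod (2 ^ n))) = !![a, c; b, d])
    (hq : ∃ q : ZMod (2 ^ n), ¬ Even q ∧ a + d = 2 * q) :
    (b = 0 ∨ b = (2 ^ (n - 1) : ℕ)) ∧ (c = 0 ∨ c = (2 ^ (n - 1) : ℕ)) ∧
      a ^ 2 = 1 ∧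
      (a = 1 ∨ a = -1 ∨ a = 1 + (2 ^ (n - 1) : ℕ) ∨ a = -1 + (2 ^ (n - 1) : ℕ)) := by
  obtain ⟨q, hq, hsum⟩ := hq
  have hM : !![a, c; b, d] * !![a, c; b, d] = 1 := by
    rw [← hm, ← sq, ← Units.val_pow_eq_pow_val, hA2, Units.val_one]
  obtain ⟨haa, hb, hc⟩ := Matrix.fin_two_mul_self_eq_one hM
  have hqu : IsUnit q :=
    ((ZMod.even_or_odd q).resolve_left hq).isUnit_of_isNilpotent_two (ZMod.isNilpotent_two n)
  have hb2 : 2 * b = 0 := hqu.mul_left_eq_zero.1 (by linear_combination hb - b * hsum)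
  have hc2 : 2 * c = 0 := hqu.mul_left_eq_zero.1 (by linear_combination hc - c * hsum)
  have ha2 : a ^ 2 = 1 := by
    linear_combination haa - ZMod.mul_eq_zero_of_two_mul_eq_zero hn hc2 hb2
  exact ⟨ZMod.eq_zero_or_eq_two_pow_of_two_mul_eq_zero (by omega) hb2,
    ZMod.eq_zero_or_eq_two_pow_of_two_mul_eq_zero (by omega) hc2, ha2,
    ZMod.eq_one_or_eq_neg_one_or_eq_add_two_pow_of_sq_eq_one (by omega) ha2⟩

/-- If `A = [[a,c],[b,d]] ∈ GL₂(ℤ/2ⁿ)` satisfies `A² = I` with `a, d` both odd and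
`a + d = 2q` for some odd `q`, then `b, c ∈ {0, 2^{n-1}}`, `a² = 1`, and
`a ∈ {±1, ±1 + 2^{n-1}}`. -/
theorem involution_odd_diagonal_sum_twice_odd
    (n : ℕ) (hn : 2 ≤ n) (A : GL (Fin 2) (ZMod (2 ^ n))) (hA2 : A ^ 2 = 1)
    (a b c d : ZMod (2 ^ n))
    (hm : (A : Matrix (Fin 2) (Fin 2) (ZMod (2 ^ n))) = !![a, c; b, d])
    (ha : ¬ Even a) (hd : ¬ Even d)
    (hq : ∃ q : ZMod (2 ^ n), ¬ Even q ∧ a + d = 2 * q) :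
    (b = 0 ∨ b = (2 ^ (n - 1) : ℕ)) ∧ (c = 0 ∨ c = (2 ^ (n - 1) : ℕ)) ∧
      a ^ 2 = 1 ∧
      (a = 1 ∨ a = -1 ∨ a = 1 + (2 ^ (n - 1) : ℕ) ∨ a = -1 + (2 ^ (n - 1) : ℕ)) :=
  involution_odd_diagonal_sum_twice_odd_general n hn A hA2 a b c d hm hq
end

section
/- For n ≥ 3, every matrix A ∈ GL₂(Z/2^n) with A² = I, A ≠ I, is conjugate to one of the 16 matrices: [[0,1],[1,0]]; the diagonal-block list [[-1,0],[0,-1]], [[1+2^{n-1},0],[0,1+2^{n-1}]], [[-1+2^{n-1},0],[0,-1+2^{n-1}]], [[1,0],[2^{n-1},1]], [[-1,0],[2^{n-1},-1]], [[1+2^{n-1},0],[2^{n-1},1+2^{n-1}]], [[-1+2^{n-1},0],[2^{n-1},-1+2^{n-1}]], [[1,0],[0,1+2^{n-1}]], [[-1,0],[0,-1+2^{n-1}]], [[1,2^{n-1}],[2^{n-1},1+2^{n-1}]], [[-1,2^{n-1}],[2^{n-1},-1+2^{n-1}]]; and [[1,0],[0,-1]], [[1+2^{n-1},0],[0,-1+2^{n-1}]],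 [[1,0],[0,-1+2^{n-1}]], [[1+2^{n-1},0],[0,-1]]. -/
/-!
Reduce modulo `2`. If `A ≢ 1`, the reduction is a non-identity involution of `GL₂(𝔽₂)`, so after
a conjugation `A₁₀` is a unit, and in the basis `e₀, A e₀` the matrix `A` is the swap matrix.
Otherwise `A = 1 + 2B`, and as `n ≥ 3` the matrix `B` is idempotent modulo `2`, hence conjugate
modulo `2` to `0`, `1` or `diag(0, 1)`. In the first two cases `±A ≡ 1 mod 4`, and then `A² = 1`
forces `±A = 1 + 2ⁿ⁻¹ D`, whose conjugacy class only depends on the class of `D mod 2`, one of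
five nonzero classes over `𝔽₂`. In the last case `A ≡ diag(1, -1) mod 4`; its eigenvectors
`(1, 2z)` and `(2w, 1)` come from quadratic equations `x = α + 2βx + 4γx²`, solved by a
fixed-point iteration that gains a factor `2` at each step, and the eigenvalues are square roots
of `1` congruent to `±1 mod 4`.
-/

open Matrix

theorem exists_isFixedPt_of_mul_sub_dvd {R : Type*} [CommRing R] {a : R} (ha : IsNilpotent a)
    (T : R → R) (hT : ∀ x y, a * (x - y) ∣ T x - T y) : ∃ x, Function.IsFixedPt T x := by
  obtain ⟨k, hk⟩ := ha
  have step : ∀ m, a ^ m ∣ T^[m + 1] 0 - T^[m] 0 := by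
    intro m
    induction m with
    | zero => simp
    | succ m ih =>
      have h := hT (T^[m + 1] 0) (T^[m] 0)
      simp only [← Function.iterate_succ_apply' T] at h
      rw [pow_succ']
      exact (mul_dvd_mul_left a ih).trans h
  refine ⟨T^[k] 0, sub_eq_zero.1 ?_⟩
  simpa [hk, Function.iterate_succ_apply'] using step k

theorem exists_eq_add_two_mul_add_four_mul_sq {R : Type*} [CommRing R] (h2 : IsNilpotent (2 : R))
    (α β γ : R) : ∃ x : R, x = α + 2 * β * x + 4 * γ * x ^ 2 := by
  obtain ⟨x, hx⟩ := exists_isFixedPt_of_mul_sub_dvd h2 (fun x => α + 2 * β * x + 4 * γ * x ^ 2)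
    fun x y => ⟨β + 2 * γ * (x + y), by ring⟩
  exact ⟨x, hx.symm⟩

theorem IsConj.one_add_smul {R A : Type*} [CommSemiring R] [Semiring A] [Algebra R A] {a b : A}
    (h : IsConj a b) (r : R) : IsConj (1 + r • a) (1 + r • b) := by
  obtain ⟨u, hu⟩ := h
  exact ⟨u, (SemiconjBy.one_right _).add_right (hu.smul_right r)⟩

theorem IsConj.mul_self_eq_one {α : Type*} [Monoid α] {a b : α} (h : IsConj a b)
    (ha : a * a = 1) : b * b = 1 := by
  simpa [sq, ha] using h.pow 2

namespace Matrix

theorem isConj_swap_of_mul_self_eq_one {K : Type*} [CommRing K] {A : Matrix (Fin 2) (Fin 2) K}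
    (hA : A * A = 1) (hA10 : IsUnit (A 1 0)) : IsConj A !![0, 1; 1, 0] := by
  rw [eta_fin_two A, mul_fin_two, one_fin_two] at hA
  simp only [EmbeddingLike.apply_eq_iff_eq, vecCons_inj, and_true] at hA
  have hQ : IsUnit !![1, A 0 0; 0, A 1 0] := by
    simpa [isUnit_iff_isUnit_det, det_fin_two_of] using hA10
  have hQA : !![1, A 0 0; 0, A 1 0] * !![0, 1; 1, 0] =
      !![A 0 0, A 0 1; A 1 0, A 1 1] * !![1, A 0 0; 0, A 1 0] := by
    rw [mul_fin_two, mul_fin_two]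
    simp only [EmbeddingLike.apply_eq_iff_eq, vecCons_inj, and_true]
    exact ⟨⟨by ring, by linear_combination -hA.1.1⟩, by ring, by linear_combination -hA.2.1⟩
  refine isConj_comm.1 ⟨hQ.unit, ?_⟩
  rw [IsUnit.unit_spec, SemiconjBy, hQA, ← eta_fin_two A]

theorem exists_isConj_map_eq {K L m : Type*} [CommRing K] [CommRing L] [Fintype m] [DecidableEq m]
    (f : K →+* L) [IsLocalHom f] (hf : Function.Surjective f) {B : Matrix m m K}
    {T : Matrix m m L} (h : IsConj (B.map f) T) : ∃ B', IsConj B B' ∧ B'.map f = T := by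
  obtain ⟨u, hu⟩ := h
  choose g hg using hf
  let P : Matrix m m K := of fun i j => g (u i j)
  have hPu : f.mapMatrix P = u := by ext i j; simp [P, hg]
  have hP : IsUnit P := by
    rw [isUnit_iff_isUnit_det]
    apply isUnit_of_map_unit f
    rw [RingHom.map_det, hPu, ← isUnit_iff_isUnit_det]
    exact u.isUnit
  set v := hP.unit
  have hinv : f.mapMatrix (↑v⁻¹ : Matrix m m K) = ↑u⁻¹ := by
    rw [← Units.ext (show (Units.map f.mapMatrix.toMonoidHom v : Matrix m m L) = u from hPu),
      Units.coe_map_inv]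
    rfl
  refine ⟨v * B * (↑v⁻¹ : Matrix m m K), ⟨v, (Units.inv_mul_cancel_right _ v).symm⟩, ?_⟩
  change f.mapMatrix ((v : Matrix m m K) * B * (↑v⁻¹ : Matrix m m K)) = T
  rw [map_mul, map_mul, hinv, IsUnit.unit_spec, hPu, RingHom.mapMatrix_apply, hu.eq,
    Units.mul_inv_cancel_right]

/-- Representatives of the conjugacy classes of nonzero matrices over `ZMod 2`. -/
def nonzeroConjReps (K : Type*) [Zero K] [One K] : List (Matrix (Fin 2) (Fin 2) K) :=
  [!![1, 0; 0, 1], !![0, 0; 1, 0], !![1, 0; 1, 1], !![0, 0; 0, 1], !![0, 1; 1, 1]]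

theorem map_nonzeroConjReps {K L : Type*} [Ring K] [Ring L] (f : K →+* L) :
    (nonzeroConjReps K).map (·.map f) = nonzeroConjReps L := by
  simp [nonzeroConjReps, ← Matrix.ext_iff, Fin.forall_fin_two]

def involutionReps {K : Type*} [Ring K] (c : K) : List (Matrix (Fin 2) (Fin 2) K) :=
  [!![0, 1; 1, 0],
   !![-1, 0; 0, -1], !![1 + c, 0; 0, 1 + c], !![-1 + c, 0; 0, -1 + c],
   !![1, 0; c, 1], !![-1, 0; c, -1], !![1 + c, 0; c, 1 + c], !![-1 + c, 0; c, -1 + c],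
   !![1, 0; 0, 1 + c], !![-1, 0; 0, -1 + c], !![1, c; c, 1 + c], !![-1, c; c, -1 + c],
   !![1, 0; 0, -1], !![1 + c, 0; 0, -1 + c], !![1, 0; 0, -1 + c], !![1 + c, 0; 0, -1]]

section involutionReps

variable {K : Type*} [Ring K] (c : K) {T : Matrix (Fin 2) (Fin 2) K}

theorem swap_mem_involutionReps : !![0, 1; 1, 0] ∈ involutionReps c := by
  simp [involutionReps]

theorem neg_one_mem_involutionReps : -1 ∈ involutionReps c := by
  simp [involutionReps, one_fin_two]

theorem one_add_smul_mem_involutionReps (hT : T ∈ nonzeroConjReps K) :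
    1 + c • T ∈ involutionReps c := by
  simp only [nonzeroConjReps, List.mem_cons, List.not_mem_nil, or_false] at hT
  rcases hT with rfl | rfl | rfl | rfl | rfl <;> simp [involutionReps, one_fin_two]

theorem neg_one_add_smul_mem_involutionReps (hT : T ∈ nonzeroConjReps K) :
    -1 + c • T ∈ involutionReps c := by
  simp only [nonzeroConjReps, List.mem_cons, List.not_mem_nil, or_false] at hT
  rcases hT with rfl | rfl | rfl | rfl | rfl <;> simp [involutionReps, one_fin_two]

theorem diagonal_mem_involutionReps {μ ν : K} (hμ : μ = 1 ∨ μ = 1 + c) (hν : ν = -1 ∨ ν = -1 + c) :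
    !![μ, 0; 0, ν] ∈ involutionReps c := by
  rcases hμ with rfl | rfl <;> rcases hν with rfl | rfl <;> simp [involutionReps]

end involutionReps

end Matrix

namespace ZMod

variable {M : Matrix (Fin 2) (Fin 2) (ZMod 2)}

theorem isConj_swap_of_mul_self_eq_one (hM : M * M = 1) (hM1 : M ≠ 1) :
    IsConj M !![0, 1; 1, 0] := by
  obtain ⟨P, hP, hPM⟩ := (by decide : ∀ M : Matrix (Fin 2) (Fin 2) (ZMod 2), M * M = 1 → M ≠ 1 →
    ∃ P : Matrix (Fin 2) (Fin 2) (ZMod 2), P.det ≠ 0 ∧ P * M = !![0, 1; 1, 0] * P) M hM hM1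
  exact ⟨((isUnit_iff_isUnit_det P).2 hP.isUnit).unit, hPM⟩

theorem eq_zero_or_eq_one_or_isConj_of_isIdempotentElem (hM : IsIdempotentElem M) :
    M = 0 ∨ M = 1 ∨ IsConj M !![0, 0; 0, 1] := by
  obtain h | h | ⟨P, hP, hPM⟩ := (by decide : ∀ M : Matrix (Fin 2) (Fin 2) (ZMod 2), M * M = M →
    M = 0 ∨ M = 1 ∨ ∃ P : Matrix (Fin 2) (Fin 2) (ZMod 2), P.det ≠ 0 ∧
      P * M = !![0, 0; 0, 1] * P) M hM
  · exact .inl h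
  · exact .inr (.inl h)
  · exact .inr (.inr ⟨((isUnit_iff_isUnit_det P).2 hP.isUnit).unit, hPM⟩)

theorem exists_mem_nonzeroConjReps_isConj (hM : M ≠ 0) :
    ∃ T ∈ nonzeroConjReps (ZMod 2), IsConj M T := by
  obtain ⟨T, hT, P, hP, hPM⟩ := (by decide : ∀ M : Matrix (Fin 2) (Fin 2) (ZMod 2), M ≠ 0 →
    ∃ T ∈ nonzeroConjReps (ZMod 2), ∃ P : Matrix (Fin 2) (Fin 2) (ZMod 2), P.det ≠ 0 ∧
      P * M = T * P) M hM
  exact ⟨T, hT, ((isUnit_iff_isUnit_det P).2 hP.isUnit).unit, hPM⟩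

end ZMod

namespace ZModTwoPow

variable {n : ℕ}

def halfModulus (n : ℕ) : ZMod (2 ^ n) := ((2 ^ (n - 1) : ℕ) : ZMod (2 ^ n))

def toZModTwo (hn : n ≠ 0) : ZMod (2 ^ n) →+* ZMod 2 := ZMod.castHom (dvd_pow_self 2 hn) _

theorem two_pow_eq_zero : (2 : ZMod (2 ^ n)) ^ n = 0 := by
  exact_mod_cast ZMod.natCast_self (2 ^ n)

theorem isNilpotent_two : IsNilpotent (2 : ZMod (2 ^ n)) := ⟨n, two_pow_eq_zero⟩

theorem two_mul_halfModulus (hn : n ≠ 0) : 2 * halfModulus n = 0 := by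
  rw [halfModulus, ← Nat.cast_two (R := ZMod (2 ^ n)), ← Nat.cast_mul, ← pow_succ',
    Nat.sub_add_cancel (Nat.one_le_iff_ne_zero.2 hn), ZMod.natCast_self]

theorem neg_halfModulus (hn : n ≠ 0) : -halfModulus n = halfModulus n := by
  linear_combination -two_mul_halfModulus hn

theorem eq_zero_or_eq_halfModulus_of_two_mul_eq_zero (hn : n ≠ 0) {x : ZMod (2 ^ n)}
    (hx : 2 * x = 0) : x = 0 ∨ x = halfModulus n := by
  obtain ⟨m, rfl⟩ : ∃ m, n = m + 1 := ⟨n - 1, by omega⟩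
  have h : ((2 * x.val : ℕ) : ZMod (2 ^ (m + 1))) = 0 := by
    rwa [Nat.cast_mul, ZMod.natCast_zmod_val, Nat.cast_ofNat]
  rw [ZMod.natCast_eq_zero_iff] at h
  obtain ⟨k, hk⟩ : 2 ^ m ∣ x.val := (Nat.mul_dvd_mul_iff_left two_pos).1 (by rwa [← pow_succ'])
  have hk2 : k < 2 := by
    have := x.val_lt
    rw [hk, pow_succ] at this
    exact lt_of_mul_lt_mul_left this (Nat.zero_le _)
  rw [← ZMod.natCast_zmod_val x, hk, halfModulus, Nat.add_sub_cancel]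
  interval_cases k <;> simp

theorem eq_one_or_eq_one_add_halfModulus_of_sq_eq_one (hn : n ≠ 0) {x y : ZMod (2 ^ n)}
    (hx : x ^ 2 = 1) (hy : x = 1 + 4 * y) : x = 1 ∨ x = 1 + halfModulus n := by
  have h8 : 8 * y * (1 + 2 * y) = 0 := by rw [hy] at hx; linear_combination hx
  rw [((Commute.all 2 y).isNilpotent_mul_right isNilpotent_two).isUnit_one_add.mul_left_eq_zero]
    at h8
  rcases eq_zero_or_eq_halfModulus_of_two_mul_eq_zero hn (x := 4 * y) (by linear_combination h8)
    with h | h <;> rw [hy, h] <;> simp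

theorem eq_neg_one_or_eq_neg_one_add_halfModulus_of_sq_eq_one (hn : n ≠ 0) {x y : ZMod (2 ^ n)}
    (hx : x ^ 2 = 1) (hy : x = -1 + 4 * y) : x = -1 ∨ x = -1 + halfModulus n := by
  rcases eq_one_or_eq_one_add_halfModulus_of_sq_eq_one hn (x := -x) (y := -y) (by rwa [neg_sq])
    (by rw [hy]; ring) with h | h
  · exact .inl (by linear_combination -h)
  · exact .inr (by linear_combination -h - two_mul_halfModulus hn)

theorem toZModTwo_eq_zero_iff (hn : n ≠ 0) {x : ZMod (2 ^ n)} : toZModTwo hn x = 0 ↔ 2 ∣ x := by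
  constructor
  · intro h
    rw [toZModTwo, ZMod.castHom_apply, ← ZMod.natCast_val, ZMod.natCast_eq_zero_iff] at h
    obtain ⟨k, hk⟩ := h
    exact ⟨k, by rw [← ZMod.natCast_zmod_val x, hk]; push_cast; rfl⟩
  · rintro ⟨y, rfl⟩
    rw [map_mul, map_ofNat]
    exact zero_mul _

instance isLocalHom_toZModTwo (hn : n ≠ 0) : IsLocalHom (toZModTwo hn) := by
  refine ⟨fun x hx => ?_⟩
  have h : toZModTwo hn (x - 1) = 0 := by
    rw [map_sub, map_one]
    generalize toZModTwo hn x = y at hx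
    revert y; decide
  obtain ⟨y, hy⟩ := (toZModTwo_eq_zero_iff hn).1 h
  rw [sub_eq_iff_eq_add'] at hy
  rw [hy]
  exact ((Commute.all 2 y).isNilpotent_mul_right isNilpotent_two).isUnit_one_add

theorem toZModTwo_eq_zero_of_four_mul_eq_zero (hn : 3 ≤ n) {x : ZMod (2 ^ n)} (hx : 4 * x = 0) :
    toZModTwo (by omega) x = 0 := by
  by_contra h
  have h4 : ((4 : ℕ) : ZMod (2 ^ n)) = 0 := by
    rw [Nat.cast_ofNat, ← (isUnit_of_map_unit _ x (Ne.isUnit h)).mul_left_eq_zero, hx]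
  rw [ZMod.natCast_eq_zero_iff] at h4
  have := Nat.le_of_dvd (by norm_num) h4
  have : 2 ^ 3 ≤ 2 ^ n := Nat.pow_le_pow_right (by norm_num) hn
  omega

variable {m m' : Type*}

theorem exists_eq_add_two_smul_of_map_eq (hn : n ≠ 0) {M N : Matrix m m' (ZMod (2 ^ n))}
    (h : M.map (toZModTwo hn) = N.map (toZModTwo hn)) : ∃ C, M = N + (2 : ZMod (2 ^ n)) • C := by
  have hdvd : ∀ i j, 2 ∣ M i j - N i j := fun i j => by
    rw [← toZModTwo_eq_zero_iff hn, map_sub, sub_eq_zero]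
    exact congrFun (congrFun h i) j
  choose C hC using hdvd
  exact ⟨of C, by ext i j; simp [← hC]⟩

theorem halfModulus_smul_eq_of_map_eq (hn : n ≠ 0) {M N : Matrix m m' (ZMod (2 ^ n))}
    (h : M.map (toZModTwo hn) = N.map (toZModTwo hn)) : halfModulus n • M = halfModulus n • N := by
  obtain ⟨C, rfl⟩ := exists_eq_add_two_smul_of_map_eq hn h
  rw [smul_add, smul_smul, mul_comm, two_mul_halfModulus hn, zero_smul, add_zero]

theorem exists_eq_halfModulus_smul_of_two_smul_eq_zero (hn : n ≠ 0)
    {M : Matrix m m' (ZMod (2 ^ n))} (hM : (2 : ZMod (2 ^ n)) • M = 0) :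
    ∃ D, M = halfModulus n • D := by
  have hD : ∀ i j, ∃ d, M i j = halfModulus n * d := fun i j => by
    rcases eq_zero_or_eq_halfModulus_of_two_mul_eq_zero hn (congrFun (congrFun hM i) j) with h | h
    · exact ⟨0, by rw [h, mul_zero]⟩
    · exact ⟨1, by rw [h, mul_one]⟩
  choose D hD using hD
  exact ⟨of D, by ext i j; simp [← hD]⟩

theorem isUnit_one_add_two_smul [Fintype m] [DecidableEq m] (C : Matrix m m (ZMod (2 ^ n))) :
    IsUnit (1 + (2 : ZMod (2 ^ n)) • C) :=
  IsNilpotent.isUnit_one_add ⟨n, by rw [smul_pow, two_pow_eq_zero, zero_smul]⟩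

theorem exists_eq_one_add_halfModulus_smul [Fintype m] [DecidableEq m] (hn : n ≠ 0)
    {A C : Matrix m m (ZMod (2 ^ n))} (hA : A * A = 1) (hC : A = 1 + (4 : ZMod (2 ^ n)) • C) :
    ∃ D, A = 1 + halfModulus n • D := by
  have h8 : (8 : ZMod (2 ^ n)) • C = 0 := by
    have h : A * A = 1 + (8 : ZMod (2 ^ n)) • C * (1 + (2 : ZMod (2 ^ n)) • C) := by
      rw [hC]
      simp only [add_mul, mul_add, one_mul, mul_one, smul_mul_assoc, mul_smul_comm, smul_smul]
      module
    rwa [hA, left_eq_add, (isUnit_one_add_two_smul C).mul_left_eq_zero] at h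
  obtain ⟨D, hD⟩ := exists_eq_halfModulus_smul_of_two_smul_eq_zero hn (M := A - 1) (by
    rw [hC, add_sub_cancel_left, smul_smul, ← h8]
    norm_num)
  exact ⟨D, by rw [← hD, add_sub_cancel]⟩

theorem exists_isConj_one_add_halfModulus_smul (hn : n ≠ 0)
    {D : Matrix (Fin 2) (Fin 2) (ZMod (2 ^ n))} (hD : 1 + halfModulus n • D ≠ 1) :
    ∃ T ∈ nonzeroConjReps (ZMod (2 ^ n)),
      IsConj (1 + halfModulus n • D) (1 + halfModulus n • T) := by
  have hD0 : D.map (toZModTwo hn) ≠ 0 := fun h => hD <| by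
    rw [halfModulus_smul_eq_of_map_eq hn (N := 0) (by rw [h, Matrix.map_zero _ (map_zero _)]),
      smul_zero, add_zero]
  obtain ⟨T, hT, hDT⟩ := ZMod.exists_mem_nonzeroConjReps_isConj hD0
  obtain ⟨D', hDD', hD'⟩ := exists_isConj_map_eq (toZModTwo hn) (ZMod.castHom_surjective _) hDT
  rw [← map_nonzeroConjReps (toZModTwo hn), List.mem_map] at hT
  obtain ⟨T, hT, rfl⟩ := hT
  exact ⟨T, hT, halfModulus_smul_eq_of_map_eq hn hD' ▸ hDD'.one_add_smul _⟩

theorem exists_isConj_one_add_halfModulus_smul_of_eq_one_add_four_smul (hn : n ≠ 0)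
    {A C : Matrix (Fin 2) (Fin 2) (ZMod (2 ^ n))} (hA : A * A = 1) (hA1 : A ≠ 1)
    (hC : A = 1 + (4 : ZMod (2 ^ n)) • C) :
    ∃ T ∈ nonzeroConjReps (ZMod (2 ^ n)), IsConj A (1 + halfModulus n • T) := by
  obtain ⟨D, rfl⟩ := exists_eq_one_add_halfModulus_smul hn hA hC
  exact exists_isConj_one_add_halfModulus_smul hn hA1

theorem exists_isConj_neg_one_add_halfModulus_smul_of_eq_neg_one_add_four_smul (hn : n ≠ 0)
    {A C : Matrix (Fin 2) (Fin 2) (ZMod (2 ^ n))} (hA : A * A = 1) (hA1 : A ≠ -1)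
    (hC : A = -1 + (4 : ZMod (2 ^ n)) • C) :
    ∃ T ∈ nonzeroConjReps (ZMod (2 ^ n)), IsConj A (-1 + halfModulus n • T) := by
  obtain ⟨T, hT, u, hu⟩ := exists_isConj_one_add_halfModulus_smul_of_eq_one_add_four_smul hn
    (A := -A) (C := -C) (by rwa [neg_mul_neg]) (fun h => hA1 (neg_eq_iff_eq_neg.1 h))
    (by rw [hC, smul_neg]; abel)
  refine ⟨T, hT, u, ?_⟩
  have hu' := hu.neg_right
  rwa [neg_neg, neg_add, ← neg_smul, neg_halfModulus hn] at hu'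

theorem exists_isConj_diagonal (hn : n ≠ 0) {A C : Matrix (Fin 2) (Fin 2) (ZMod (2 ^ n))}
    (hA : A * A = 1) (hC : A = !![1, 0; 0, -1] + (4 : ZMod (2 ^ n)) • C) :
    ∃ μ ν, IsConj A !![μ, 0; 0, ν] ∧ (μ = 1 ∨ μ = 1 + halfModulus n) ∧
      (ν = -1 ∨ ν = -1 + halfModulus n) := by
  -- The eigenvector equations for `(1, 2z)` and `(2w, 1)`, divided by `4`.
  obtain ⟨z, hz⟩ := exists_eq_add_two_mul_add_four_mul_sq isNilpotent_two
    (C 1 0) (C 1 1 - C 0 0) (-C 0 1)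
  obtain ⟨w, hw⟩ := exists_eq_add_two_mul_add_four_mul_sq isNilpotent_two
    (-C 0 1) (C 1 1 - C 0 0) (C 1 0)
  set μ := 1 + 4 * (C 0 0 + 2 * C 0 1 * z) with hμ
  set ν := -1 + 4 * (C 1 1 + 2 * C 1 0 * w) with hν
  let Q : Matrix (Fin 2) (Fin 2) (ZMod (2 ^ n)) := !![1, 2 * w; 2 * z, 1]
  have hQ : IsUnit Q := by
    rw [isUnit_iff_isUnit_det, det_fin_two_of]
    convert ((Commute.all 2 (-(2 * w * z))).isNilpotent_mul_right isNilpotent_two).isUnit_one_add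
      using 1
    ring
  have hA' : A = !![1 + 4 * C 0 0, 4 * C 0 1; 4 * C 1 0, -1 + 4 * C 1 1] := by
    rw [hC, eta_fin_two C]
    simp
  have hAQ : A * Q = Q * !![μ, 0; 0, ν] := by
    rw [hA', mul_fin_two, mul_fin_two]
    simp only [EmbeddingLike.apply_eq_iff_eq, vecCons_inj, and_true]
    exact ⟨⟨by ring, by linear_combination 4 * hw⟩, by linear_combination (-4) * hz, by ring⟩
  have hAD : IsConj A !![μ, 0; 0, ν] := isConj_comm.1 ⟨hQ.unit, hAQ.symm⟩
  have hD := hAD.mul_self_eq_one hA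
  have hμ2 : μ ^ 2 = 1 := by simpa [sq] using congrFun (congrFun hD 0) 0
  have hν2 : ν ^ 2 = 1 := by simpa [sq] using congrFun (congrFun hD 1) 1
  exact ⟨μ, ν, hAD, eq_one_or_eq_one_add_halfModulus_of_sq_eq_one hn hμ2 hμ,
    eq_neg_one_or_eq_neg_one_add_halfModulus_of_sq_eq_one hn hν2 hν⟩

theorem isIdempotentElem_map_of_mul_self_eq_one (hn : 3 ≤ n)
    {B : Matrix (Fin 2) (Fin 2) (ZMod (2 ^ n))}
    (hB : (1 + (2 : ZMod (2 ^ n)) • B) * (1 + (2 : ZMod (2 ^ n)) • B) = 1) :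
    IsIdempotentElem (B.map (toZModTwo (by omega))) := by
  have h4 : (4 : ZMod (2 ^ n)) • (B * B + B) = 0 := by
    have h : (1 + (2 : ZMod (2 ^ n)) • B) * (1 + (2 : ZMod (2 ^ n)) • B) =
        1 + (4 : ZMod (2 ^ n)) • (B * B + B) := by
      simp only [add_mul, mul_add, one_mul, mul_one, smul_mul_assoc, mul_smul_comm]
      module
    rwa [hB, left_eq_add] at h
  have h : (toZModTwo (by omega)).mapMatrix (B * B + B) = 0 := by
    ext i j
    refine toZModTwo_eq_zero_of_four_mul_eq_zero hn ?_
    simpa using congrFun (congrFun h4 i) j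
  rw [map_add, map_mul] at h
  exact (eq_neg_of_add_eq_zero_left h).trans (CharTwo.neg_eq _)

theorem exists_isConj_mem_involutionReps_of_map_eq_one (hn : 3 ≤ n)
    {A : Matrix (Fin 2) (Fin 2) (ZMod (2 ^ n))} (hA : A * A = 1) (hA1 : A ≠ 1)
    (hA2 : A.map (toZModTwo (by omega)) = 1) :
    ∃ S ∈ involutionReps (halfModulus n), IsConj A S := by
  have hn0 : n ≠ 0 := by omega
  have hmap_one := Matrix.map_one (toZModTwo hn0) (map_zero _) (map_one _) (n := Fin 2)
  obtain ⟨B, rfl⟩ := exists_eq_add_two_smul_of_map_eq hn0 (N := 1) (hA2.trans hmap_one.symm)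
  rcases ZMod.eq_zero_or_eq_one_or_isConj_of_isIdempotentElem
    (isIdempotentElem_map_of_mul_self_eq_one hn hA) with h0 | h1 | hE
  · obtain ⟨C, rfl⟩ := exists_eq_add_two_smul_of_map_eq hn0 (N := 0)
      (h0.trans (Matrix.map_zero _ (map_zero _)).symm)
    obtain ⟨T, hT, hconj⟩ :=
      exists_isConj_one_add_halfModulus_smul_of_eq_one_add_four_smul hn0 hA hA1 (C := C) (by module)
    exact ⟨_, one_add_smul_mem_involutionReps _ hT, hconj⟩
  · obtain ⟨C, rfl⟩ := exists_eq_add_two_smul_of_map_eq hn0 (N := 1) (h1.trans hmap_one.symm)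
    by_cases hA' : 1 + (2 : ZMod (2 ^ n)) • (1 + (2 : ZMod (2 ^ n)) • C) = -1
    · exact ⟨-1, neg_one_mem_involutionReps _, hA' ▸ IsConj.refl _⟩
    obtain ⟨T, hT, hconj⟩ := exists_isConj_neg_one_add_halfModulus_smul_of_eq_neg_one_add_four_smul
      hn0 hA hA' (C := 1 + C) (by module)
    exact ⟨_, neg_one_add_smul_mem_involutionReps _ hT, hconj⟩
  · obtain ⟨B', hBB', hB'⟩ := exists_isConj_map_eq (toZModTwo hn0) (ZMod.castHom_surjective _) hE
    obtain ⟨C, rfl⟩ := exists_eq_add_two_smul_of_map_eq hn0 (N := !![0, 0; 0, 1])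
      (hB'.trans (by simp [← Matrix.ext_iff, Fin.forall_fin_two]))
    have hconj := hBB'.one_add_smul (2 : ZMod (2 ^ n))
    obtain ⟨μ, ν, hD, hμ, hν⟩ := exists_isConj_diagonal hn0 (hconj.mul_self_eq_one hA)
      (C := !![0, 0; 0, 1] + C) (by
        ext i j; fin_cases i <;> fin_cases j <;> simp [one_apply] <;> ring)
    exact ⟨_, diagonal_mem_involutionReps _ hμ hν, hconj.trans hD⟩

theorem exists_isConj_mem_involutionReps (hn : 3 ≤ n) {A : Matrix (Fin 2) (Fin 2) (ZMod (2 ^ n))}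
    (hA : A * A = 1) (hA1 : A ≠ 1) : ∃ S ∈ involutionReps (halfModulus n), IsConj A S := by
  have hn0 : n ≠ 0 := by omega
  by_cases hA2 : A.map (toZModTwo hn0) = 1
  · exact exists_isConj_mem_involutionReps_of_map_eq_one hn hA hA1 hA2
  have hA' : A.map (toZModTwo hn0) * A.map (toZModTwo hn0) = 1 := by
    rw [← Matrix.map_mul, hA, Matrix.map_one _ (map_zero _) (map_one _)]
  obtain ⟨A', hAA', hA'⟩ := exists_isConj_map_eq (toZModTwo hn0) (ZMod.castHom_surjective _)
    (ZMod.isConj_swap_of_mul_self_eq_one hA' hA2)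
  have h10 : IsUnit (A' 1 0) := by
    have h := congrFun (congrFun hA' 1) 0
    simp only [map_apply, of_apply, cons_val', cons_val_zero, cons_val_fin_one, cons_val_one] at h
    exact isUnit_of_map_unit (toZModTwo hn0) _ (by rw [h]; exact isUnit_one)
  exact ⟨_, swap_mem_involutionReps _,
    hAA'.trans (isConj_swap_of_mul_self_eq_one (hAA'.mul_self_eq_one hA) h10)⟩

end ZModTwoPow

/-- For `n ≥ 3`, every non-identity involution in `GL₂(ℤ/2ⁿ)` is conjugate to one of the
listed `16` matrices (where `c = 2^{n-1}`). -/
theorem involution_conjugate_to_one_of_sixteen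
    (n : ℕ) (hn : 3 ≤ n) (A : GL (Fin 2) (ZMod (2 ^ n)))
    (hA2 : A ^ 2 = 1) (hA1 : A ≠ 1) :
    letI c : ZMod (2 ^ n) := (2 ^ (n - 1) : ℕ)
    ∃ P : GL (Fin 2) (ZMod (2 ^ n)),
      ((P * A * P⁻¹ : GL (Fin 2) (ZMod (2 ^ n))) : Matrix (Fin 2) (Fin 2) (ZMod (2 ^ n))) ∈
        [!![0, 1; 1, 0],
         !![-1, 0; 0, -1], !![1 + c, 0; 0, 1 + c], !![-1 + c, 0; 0, -1 + c],
         !![1, 0; c, 1], !![-1, 0; c, -1], !![1 + c, 0; c, 1 + c], !![-1 + c, 0; c, -1 + c],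
         !![1, 0; 0, 1 + c], !![-1, 0; 0, -1 + c], !![1, c; c, 1 + c], !![-1, c; c, -1 + c],
         !![1, 0; 0, -1], !![1 + c, 0; 0, -1 + c], !![1, 0; 0, -1 + c], !![1 + c, 0; 0, -1]] := by
  obtain ⟨S, hS, P, hP⟩ := ZModTwoPow.exists_isConj_mem_involutionReps hn (A := A)
    (by rw [← Units.val_mul, ← sq, hA2, Units.val_one]) (fun h => hA1 (Units.ext h))
  refine ⟨P, ?_⟩
  rw [Units.val_mul, Units.val_mul, hP.eq, Units.mul_inv_cancel_right]
  exact hS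
end

section
/- Let n ≥ 3 and let A = [[a,c],[b,-a]] ∈ GL₂(Z/2^n) with A² = I, b and c even, and a ≡ 1 (mod 4). Then A is conjugate in GL₂(Z/2^n) to [[1,0],[0,-1]] if (a² + bc − 1)/2 = 0 in Z/2^n, and to [[1+2^{n-1},0],[0,-1+2^{n-1}]] if (a² + bc − 1)/2 = 2^{n-1} in Z/2^n. -/
/-!
Write `a = 2q + 1`, `b = 2β`, `c = 2γ` with natural representatives; then the statement's `e`
is `2 (q² + q + βγ)`. With `w = 0` resp. `w = 2ⁿ⁻²`, so that `e = 2w`, `4w = 0` and `2w² = 0`,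
the matrix `P = [[q + 1 + w, γ], [-β, q + 1 + w]]` satisfies `P A = diag(1 + 2w, -1 + 2w) P`
by a ring identity. Its determinant `(q + 1 + w)² + βγ` is odd, hence a unit: `q` is even
because `a ≡ 1 mod 4`, and `βγ` is even because `4 (q² + q + βγ) = a² + bc - 1 ≡ 0 mod 2ⁿ`
with `n ≥ 3`.
-/

open Matrix

section CommRing

variable {R : Type*} [CommRing R]

theorem exists_conj_eq_of_mul_eq (A : GL (Fin 2) R) {P D : Matrix (Fin 2) (Fin 2) R}
    (hP : IsUnit P.det) (h : P * A = D * P) :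
    ∃ Q : GL (Fin 2) R, ((Q * A * Q⁻¹ : GL (Fin 2) R) : Matrix (Fin 2) (Fin 2) R) = D := by
  refine ⟨nonsingInvUnit P hP, ?_⟩
  change P * A * P⁻¹ = D
  rw [h, mul_nonsing_inv_cancel_right _ _ hP]

theorem sq_add_mul_eq_one_of_sq_eq_one {a b c : R} (h : !![a, c; b, -a] ^ 2 = 1) :
    a ^ 2 + b * c = 1 := by
  have h00 := congrFun₂ h 0 0
  simp only [sq, mul_fin_two, of_apply, cons_val', cons_val_zero, empty_val',
    cons_val_fin_one, one_apply_eq] at h00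
  linear_combination h00

theorem conjugator_mul_eq_diag_mul {q β γ w : R} (he : 2 * (q ^ 2 + q + β * γ) = 2 * w)
    (h4 : 4 * w = 0) (hw2 : 2 * w ^ 2 = 0) :
    !![q + 1 + w, γ; -β, q + 1 + w] * !![2 * q + 1, 2 * γ; 2 * β, -(2 * q + 1)] =
      !![1 + 2 * w, 0; 0, -1 + 2 * w] * !![q + 1 + w, γ; -β, q + 1 + w] := by
  simp only [mul_fin_two, EmbeddingLike.apply_eq_iff_eq, vecCons_inj, and_true]
  refine ⟨⟨?_, ?_⟩, ?_, ?_⟩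
  · linear_combination he - hw2
  · ring
  · linear_combination β * h4
  · linear_combination -he - (1 + q) * h4 - hw2

theorem exists_conj_eq_diag {A : GL (Fin 2) R} {q β γ w : R}
    (hA : (A : Matrix (Fin 2) (Fin 2) R) = !![2 * q + 1, 2 * γ; 2 * β, -(2 * q + 1)])
    (he : 2 * (q ^ 2 + q + β * γ) = 2 * w) (h4 : 4 * w = 0) (hw2 : 2 * w ^ 2 = 0)
    (hdet : IsUnit ((q + 1 + w) ^ 2 + β * γ)) :
    ∃ P : GL (Fin 2) R, ((P * A * P⁻¹ : GL (Fin 2) R) : Matrix (Fin 2) (Fin 2) R) =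
      !![1 + 2 * w, 0; 0, -1 + 2 * w] := by
  refine exists_conj_eq_of_mul_eq A ?_ (hA ▸ conjugator_mul_eq_diag_mul he h4 hw2)
  rwa [det_fin_two_of, ← sq, mul_neg, sub_neg_eq_add, mul_comm γ]

end CommRing

namespace ZMod

theorem val_modEq_of_eq_natCast_add_mul {m N : ℕ} [NeZero N] (h : m ∣ N) {x u : ZMod N}
    {y : ℕ} (hx : x = y + m * u) : x.val ≡ y [MOD m] := by
  rw [← natCast_eq_natCast_iff, natCast_val, ← castHom_apply (h := h), hx, map_add, map_mul,
    map_natCast, map_natCast, natCast_self, zero_mul, add_zero]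

theorem two_dvd_val_of_even {n : ℕ} (hn : n ≠ 0) {x : ZMod (2 ^ n)} (hx : Even x) :
    2 ∣ x.val := by
  obtain ⟨t, rfl⟩ := hx
  exact Nat.modEq_zero_iff_dvd.mp <|
    val_modEq_of_eq_natCast_add_mul (dvd_pow_self 2 hn) (u := t) (by push_cast; ring)

theorem val_mod_four_of_eq_one_add_four_mul {n : ℕ} (hn : 2 ≤ n) {x u : ZMod (2 ^ n)}
    (hx : x = 1 + 4 * u) : x.val % 4 = 1 :=
  val_modEq_of_eq_natCast_add_mul (m := 4) (y := 1) (pow_dvd_pow 2 hn)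
    (by rw [hx]; push_cast; rfl)

theorem isUnit_natCast_of_odd {n m : ℕ} (hn : n ≠ 0) (hm : Odd m) :
    IsUnit (m : ZMod (2 ^ n)) :=
  (isUnit_natCast_iff_not_dvd_pow Nat.prime_two (Nat.pos_of_ne_zero hn)).mpr
    hm.not_two_dvd_nat

end ZMod

theorem even_of_two_pow_dvd {n q m : ℕ} (hn : 3 ≤ n) (h : 2 ^ n ∣ 4 * (q ^ 2 + q + m)) :
    Even m := by
  have h8 : 4 * 2 ∣ 4 * (q ^ 2 + q + m) := (pow_dvd_pow 2 hn).trans h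
  have hsum : Even (q ^ 2 + q + m) :=
    even_iff_two_dvd.mpr (Nat.dvd_of_mul_dvd_mul_left (by norm_num) h8)
  have hq : Even (q ^ 2 + q) := by simpa [sq, ← Nat.mul_succ] using Nat.even_mul_succ_self q
  exact (Nat.even_add.mp hsum).mp hq

theorem sq_add_mul_sub_one_div_two (q β γ : ℕ) :
    ((2 * q + 1) ^ 2 + 2 * β * (2 * γ) - 1) / 2 = 2 * (q ^ 2 + q + β * γ) := by
  rw [show (2 * q + 1) ^ 2 + 2 * β * (2 * γ) = 2 * (2 * (q ^ 2 + q + β * γ)) + 1 by ring]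
  omega

theorem exists_conj_eq_diag_of_natCast {n q β γ w : ℕ} (hn : n ≠ 0)
    {A : GL (Fin 2) (ZMod (2 ^ n))}
    (hA : (A : Matrix (Fin 2) (Fin 2) (ZMod (2 ^ n))) =
      !![((2 * q + 1 : ℕ) : ZMod (2 ^ n)), ((2 * γ : ℕ) : ZMod (2 ^ n));
         ((2 * β : ℕ) : ZMod (2 ^ n)), -((2 * q + 1 : ℕ) : ZMod (2 ^ n))])
    (hq : Even q) (hβγ : Even (β * γ)) (hw : Even w)
    (he : ((2 * (q ^ 2 + q + β * γ) : ℕ) : ZMod (2 ^ n)) = ((2 * w : ℕ) : ZMod (2 ^ n)))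
    (h4 : 2 ^ n ∣ 4 * w) (hw2 : 2 ^ n ∣ 2 * w ^ 2) :
    ∃ P : GL (Fin 2) (ZMod (2 ^ n)),
      ((P * A * P⁻¹ : GL (Fin 2) (ZMod (2 ^ n))) : Matrix (Fin 2) (Fin 2) (ZMod (2 ^ n))) =
        !![1 + 2 * (w : ZMod (2 ^ n)), 0; 0, -1 + 2 * (w : ZMod (2 ^ n))] := by
  have hdet : Odd ((q + 1 + w) ^ 2 + β * γ) := ((hq.add_one.add_even hw).pow).add_even hβγ
  refine exists_conj_eq_diag (q := (q : ZMod (2 ^ n))) (β := β) (γ := γ)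
    (by rw [hA]; push_cast; rfl) (by exact_mod_cast he) ?_ ?_
    (by exact_mod_cast ZMod.isUnit_natCast_of_odd hn hdet)
  · exact_mod_cast (ZMod.natCast_eq_zero_iff _ _).mpr h4
  · exact_mod_cast (ZMod.natCast_eq_zero_iff _ _).mpr hw2

/-- Let `n ≥ 3` and `A = [[a,c],[b,-a]] ∈ GL₂(ℤ/2ⁿ)` with `A² = I`, `b, c` even and
`a ≡ 1 (mod 4)`. Then `A` is conjugate to `diag(1,-1)` when `(a² + bc − 1)/2 = 0` (computed
with integer representatives), and to `diag(1+2^{n-1}, -1+2^{n-1})` when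
`(a² + bc − 1)/2 = 2^{n-1}`. -/
theorem involution_trace_zero_conjugation
    (n : ℕ) (hn : 3 ≤ n) (A : GL (Fin 2) (ZMod (2 ^ n)))
    (a b c : ZMod (2 ^ n))
    (hm : (A : Matrix (Fin 2) (Fin 2) (ZMod (2 ^ n))) = !![a, c; b, -a])
    (hA2 : A ^ 2 = 1)
    (hb : Even b) (hc : Even c)
    (ha : ∃ u : ZMod (2 ^ n), a = 1 + 4 * u) :
    letI e : ZMod (2 ^ n) := (((a.val ^ 2 + b.val * c.val - 1) / 2 : ℕ) : ZMod (2 ^ n))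
    (e = 0 →
      ∃ P : GL (Fin 2) (ZMod (2 ^ n)),
        ((P * A * P⁻¹ : GL (Fin 2) (ZMod (2 ^ n))) : Matrix (Fin 2) (Fin 2) (ZMod (2 ^ n))) =
          !![1, 0; 0, -1]) ∧
    (e = ((2 ^ (n - 1) : ℕ) : ZMod (2 ^ n)) →
      ∃ P : GL (Fin 2) (ZMod (2 ^ n)),
        ((P * A * P⁻¹ : GL (Fin 2) (ZMod (2 ^ n))) : Matrix (Fin 2) (Fin 2) (ZMod (2 ^ n))) =
          !![1 + ((2 ^ (n - 1) : ℕ) : ZMod (2 ^ n)), 0;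
             0, -1 + ((2 ^ (n - 1) : ℕ) : ZMod (2 ^ n))]) := by
  have hn0 : n ≠ 0 := by omega
  obtain ⟨u, hu⟩ := ha
  obtain ⟨s, hs⟩ : ∃ s, a.val = 2 * (2 * s) + 1 :=
    ⟨a.val / 4, by have := ZMod.val_mod_four_of_eq_one_add_four_mul (by omega) hu; omega⟩
  obtain ⟨β, hβ⟩ := ZMod.two_dvd_val_of_even hn0 hb
  obtain ⟨γ, hγ⟩ := ZMod.two_dvd_val_of_even hn0 hc
  have hA : (A : Matrix (Fin 2) (Fin 2) (ZMod (2 ^ n))) =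
      !![((2 * (2 * s) + 1 : ℕ) : ZMod (2 ^ n)), ((2 * γ : ℕ) : ZMod (2 ^ n));
         ((2 * β : ℕ) : ZMod (2 ^ n)), -((2 * (2 * s) + 1 : ℕ) : ZMod (2 ^ n))] := by
    simp only [hm, ← hs, ← hβ, ← hγ, ZMod.natCast_zmod_val]
  have hdvd : 2 ^ n ∣ 4 * ((2 * s) ^ 2 + 2 * s + β * γ) := by
    have hsq := sq_add_mul_eq_one_of_sq_eq_one
      (by rw [← hA, ← Units.val_pow_eq_pow_val, hA2, Units.val_one])
    rw [← ZMod.natCast_eq_zero_iff]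
    push_cast at hsq ⊢
    linear_combination hsq
  have conj := fun w => exists_conj_eq_diag_of_natCast (w := w) hn0 hA (even_two_mul s)
    (even_of_two_pow_dvd hn hdvd)
  simp only [hs, hβ, hγ, sq_add_mul_sub_one_div_two]
  refine ⟨fun he0 => ?_, fun heh => ?_⟩
  · simpa using conj 0 .zero (by simpa using he0) (dvd_zero _) (by simp)
  · have h2w : 2 * 2 ^ (n - 2) = 2 ^ (n - 1) := by rw [← pow_succ']; congr 1; omega
    have h4 : 2 ^ n = 4 * 2 ^ (n - 2) := by
      rw [show 4 = 2 ^ 2 from rfl, ← pow_add]; congr 1; omega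
    have hw2 : 2 * (2 ^ (n - 2)) ^ 2 = 2 ^ n * 2 ^ (n - 3) := by
      rw [← pow_mul, ← pow_succ', ← pow_add]; congr 1; omega
    obtain ⟨P, hP⟩ := conj (2 ^ (n - 2)) ((Nat.even_pow' (by omega)).mpr even_two)
      (by rw [heh, h2w]) h4.dvd ⟨_, hw2⟩
    exact ⟨P, by rw [hP]; push_cast [← h2w]; rfl⟩
end

section
/- Let n ≥ 2, G = Z/2^n × Z/2^n with generators x, y, ξ a primitive 2^n-th root of unity, and ω a primitive 2^{n+1}-th root of unity with ω² = ξ. Let t act on G by swapping x and y. Define α'_{1,2}(x^{a1}y^{a2}, x^{b1}y^{b2}) = ω^{a1 b2 − a2 b1} (−1)^{(a1+b1)k2 + (a2+b2)k1}, where exponents are canonical representatives in {0,…,2^n−1} and k_j = 0 if 0 ≤ a_j + b_j < 2^n and k_j = 1 if 2^n ≤ a_j + b_j < 2^{n+1}. Then α'_{1,2}(g,h) · α'_{1,2}(t(g), t(h)) = 1 for all g, h ∈ G. -/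
/-- The cocycle `α'_{1,2}(g,h) = ω^{a₁b₂ - a₂b₁}(-1)^{(a₁+b₁)k₂+(a₂+b₂)k₁}` on
`G = ℤ/2ⁿ × ℤ/2ⁿ`, with exponents computed from canonical representatives and carry
indicators `k_j`. -/
noncomputable def alphaPrime (n : ℕ) {k : Type*} [Field k] (ω : kˣ)
    (g h : ZMod (2 ^ n) × ZMod (2 ^ n)) : kˣ :=
  ω ^ ((g.1.val * h.2.val : ℤ) - (g.2.val * h.1.val : ℤ)) *
    (-1 : kˣ) ^ ((g.1.val + h.1.val) * (if g.2.val + h.2.val < 2 ^ n then 0 else 1) +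
      (g.2.val + h.2.val) * (if g.1.val + h.1.val < 2 ^ n then 0 else 1))

/- The swap negates the exponent of `ω` and leaves the exponent of `-1` unchanged; as `-1`
is its own inverse, this inverts `α'_{1,2}`. -/
theorem alphaPrime_swap (n : ℕ) {k : Type*} [Field k] (ω : kˣ)
    (g h : ZMod (2 ^ n) × ZMod (2 ^ n)) :
    alphaPrime n ω g.swap h.swap = (alphaPrime n ω g h)⁻¹ := by
  simp only [alphaPrime, Prod.fst_swap, Prod.snd_swap, mul_inv, ← zpow_neg, neg_sub, ← inv_pow,
    inv_neg_one, add_comm ((g.2.val + h.2.val) * _)]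

theorem alphaPrime_mul_swap_eq_one_general
    (n : ℕ) (k : Type*) [Field k] (ω : kˣ) :
    ∀ g h : ZMod (2 ^ n) × ZMod (2 ^ n),
      alphaPrime n ω g h * alphaPrime n ω g.swap h.swap = 1 := by
  intro g h
  rw [alphaPrime_swap, mul_inv_cancel]

/-- For the swap action `t(x) = y`, `t(y) = x`, the cocycle `α'_{1,2}` satisfies
`α'_{1,2}(g,h) · α'_{1,2}(t(g),t(h)) = 1`. -/
theorem alphaPrime_mul_swap_eq_one
    (n : ℕ) (hn : 2 ≤ n) (k : Type*) [Field k] [CharZero k]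
    (ξ ω : kˣ) (hξ : IsPrimitiveRoot ξ (2 ^ n))
    (hω : IsPrimitiveRoot ω (2 ^ (n + 1))) (hωξ : ω ^ 2 = ξ) :
    ∀ g h : ZMod (2 ^ n) × ZMod (2 ^ n),
      alphaPrime n ω g h * alphaPrime n ω g.swap h.swap = 1 :=
  alphaPrime_mul_swap_eq_one_general n k ω
end

section
/- Let n ≥ 2, G = Z/2^n × Z/2^n, ξ a primitive 2^n-th root of unity, ω with ω² = ξ a primitive 2^{n+1}-th root of unity, and γ(x^{a1}y^{a2}) = ω^{a1 a2} (canonical representatives). Then for all g, h ∈ G, α_{1,2}(g,h) γ(g) γ(h) γ(gh)^{-1} = ω^{a1 b2 − a2 b1}(−1)^{(a1+b1)k2+(a2+b2)k1} where g = x^{a1}y^{a2}, h = x^{b1}y^{b2}, and k_j = 0 or 1 according as a_j + b_j < 2^n or ≥ 2^n. In particular the class of α_{1,2} in H²(G, k^×) equals the class of this cocycle α'_{1,2}. -/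
/-!
Write every factor as a power of `ω`, using `ξ = ω²` and `-1 = ω^{2ⁿ}`. Since the canonical
representative of `aⱼ + bⱼ` is `aⱼ + bⱼ - 2ⁿkⱼ`, the two exponents of `ω` differ by
`-2²ⁿk₁k₂`, a multiple of the order `2ⁿ⁺¹` of `ω`.
-/

theorem ZMod.val_add_eq_sub_ite {N : ℕ} [NeZero N] (a b : ZMod N) :
    ((a + b).val : ℤ) = a.val + b.val - N * (if a.val + b.val < N then 0 else 1 : ℕ) := by
  split_ifs with h
  · simp [ZMod.val_add_of_lt h]
  · rw [not_lt] at h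
    simp [ZMod.val_add_of_le h, Nat.cast_sub h]

theorem IsPrimitiveRoot.pow_eq_neg_one_of_two_mul {R : Type*} [CommRing R] [NoZeroDivisors R]
    {ζ : Rˣ} {N : ℕ} (hN : N ≠ 0) (h : IsPrimitiveRoot ζ (2 * N)) : ζ ^ N = -1 := by
  have h2 : IsPrimitiveRoot (ζ ^ N) 2 := by
    simpa [hN] using h.pow_of_dvd hN (dvd_mul_left N 2)
  exact Units.ext (IsPrimitiveRoot.coe_units_iff.mpr h2).eq_neg_one_of_two_right

theorem sq_pow_mul_coboundary_eq_of_pow_eq_neg_one {M : Type*} [CommGroup M] [HasDistribNeg M]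
    {ω : M} {N : ℕ} (hN : Even N) (hω : ω ^ N = -1) {a₁ a₂ b₁ b₂ c₁ c₂ k₁ k₂ : ℕ}
    (hc₁ : (c₁ : ℤ) = a₁ + b₁ - N * k₁) (hc₂ : (c₂ : ℤ) = a₂ + b₂ - N * k₂) :
    (ω ^ 2) ^ (a₁ * b₂) * (ω ^ (a₁ * a₂) * ω ^ (b₁ * b₂) * (ω ^ (c₁ * c₂))⁻¹) =
      ω ^ ((a₁ * b₂ : ℤ) - (a₂ * b₁ : ℤ)) * (-1) ^ ((a₁ + b₁) * k₂ + (a₂ + b₂) * k₁) := by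
  have h_period (E t : ℤ) : ω ^ (E + N * N * t) = ω ^ E := by
    rw [zpow_add, zpow_mul, zpow_mul, zpow_natCast, zpow_natCast, hω, hN.neg_one_pow, one_zpow,
      mul_one]
  rw [← hω, ← pow_mul, ← pow_mul]
  simp only [← zpow_natCast, ← zpow_neg, ← zpow_add]
  conv_rhs => rw [← h_period _ (-(k₁ * k₂))]
  congr 1
  push_cast
  rw [hc₁, hc₂]
  ring

theorem alpha12_cohomologous_alphaPrime_general
    (n : ℕ) (hn : 2 ≤ n) (k : Type*) [Field k]
    (ξ ω : kˣ)
    (hω : IsPrimitiveRoot ω (2 ^ (n + 1))) (hωξ : ω ^ 2 = ξ) :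
    ∀ g h : ZMod (2 ^ n) × ZMod (2 ^ n),
      ξ ^ (g.1.val * h.2.val) *
          (ω ^ (g.1.val * g.2.val) * ω ^ (h.1.val * h.2.val) *
            (ω ^ ((g + h).1.val * (g + h).2.val))⁻¹) =
        alphaPrime n ω g h := by
  rintro ⟨a₁, a₂⟩ ⟨b₁, b₂⟩
  have hω_pow : ω ^ 2 ^ n = -1 :=
    IsPrimitiveRoot.pow_eq_neg_one_of_two_mul (by positivity) (by rwa [← pow_succ'])
  have h_even : Even (2 ^ n) := (Nat.even_pow' (by omega)).mpr even_two
  subst hωξ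
  exact sq_pow_mul_coboundary_eq_of_pow_eq_neg_one h_even hω_pow
    (ZMod.val_add_eq_sub_ite a₁ b₁) (ZMod.val_add_eq_sub_ite a₂ b₂)

/-- Modifying `α_{1,2}(g,h) = ξ^{a₁b₂}` by the coboundary of `γ(g) = ω^{a₁a₂}` yields the
cocycle `α'_{1,2}`; in particular `[α_{1,2}] = [α'_{1,2}]` in `H²(G, kˣ)`. -/
theorem alpha12_cohomologous_alphaPrime
    (n : ℕ) (hn : 2 ≤ n) (k : Type*) [Field k] [IsAlgClosed k] [CharZero k]
    (ξ ω : kˣ) (hξ : IsPrimitiveRoot ξ (2 ^ n))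
    (hω : IsPrimitiveRoot ω (2 ^ (n + 1))) (hωξ : ω ^ 2 = ξ) :
    ∀ g h : ZMod (2 ^ n) × ZMod (2 ^ n),
      ξ ^ (g.1.val * h.2.val) *
          (ω ^ (g.1.val * g.2.val) * ω ^ (h.1.val * h.2.val) *
            (ω ^ ((g + h).1.val * (g + h).2.val))⁻¹) =
        alphaPrime n ω g h :=
  alpha12_cohomologous_alphaPrime_general n hn k ξ ω hω hωξ
end

section
/- Let G = Z/4 × Z/4 with generators x, y and let i be a primitive 4th root of unity. Let t act on G by t(x) = xy², t(y) = x²y^{-1}. Define α_{p,q}(x^{a1}y^{a2}, x^{b1}y^{b2}) = i^{a_p b_q}. Then the product cocycle α = α_{1,1}α_{1,2}α_{2,2} satisfies α(g,h) · α(t(g), t(h)) = 1 for all g, h ∈ G. -/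
/-!
Since `i` has order `4`, it suffices that the total exponent of `i` vanishes in `ℤ/4`. Writing
`g = (a, b)` and `h = (c, d)`, that exponent expands to `4 (2ac + bc + bd)`.
-/

theorem cocycle_exponent_add_twist_eq_zero {R : Type*} [CommRing R] (four_eq_zero : (4 : R) = 0)
    (a b c d : R) :
    a * c + a * d + b * d +
      ((a + 2 * b) * (c + 2 * d) + (a + 2 * b) * (2 * c - d) + (2 * a - b) * (2 * c - d)) = 0 := by
  linear_combination (2 * a * c + b * c + b * d) * four_eq_zero

theorem alpha_product_case6_antisymmetric_general
    (k : Type*) [Field k]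
    (i : kˣ) (hi : IsPrimitiveRoot i 4)
    (t : ZMod 4 × ZMod 4 → ZMod 4 × ZMod 4)
    (ht : ∀ g : ZMod 4 × ZMod 4, t g = (g.1 + 2 * g.2, 2 * g.1 - g.2)) :
    ∀ g h : ZMod 4 × ZMod 4,
      (i ^ (g.1.val * h.1.val) * i ^ (g.1.val * h.2.val) * i ^ (g.2.val * h.2.val)) *
        (i ^ ((t g).1.val * (t h).1.val) * i ^ ((t g).1.val * (t h).2.val) *
          i ^ ((t g).2.val * (t h).2.val)) = 1 := by
  rintro ⟨a, b⟩ ⟨c, d⟩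
  simp only [ht, ← pow_add]
  rw [hi.pow_eq_one_iff_dvd, ← ZMod.natCast_eq_zero_iff]
  push_cast [ZMod.natCast_val, ZMod.cast_id]
  exact cocycle_exponent_add_twist_eq_zero rfl a b c d

/-- For `G = ℤ/4 × ℤ/4` with the action `t(x) = xy²`, `t(y) = x²y⁻¹`, the cocycle
`α = α_{1,1}α_{1,2}α_{2,2}` (where `α_{p,q}(g,h) = i^{a_p b_q}`) satisfies
`α(g,h) · α(t(g),t(h)) = 1` for all `g, h ∈ G`. -/
theorem alpha_product_case6_antisymmetric
    (k : Type*) [Field k] [CharZero k]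
    (i : kˣ) (hi : IsPrimitiveRoot i 4)
    (t : ZMod 4 × ZMod 4 → ZMod 4 × ZMod 4)
    (ht : ∀ g : ZMod 4 × ZMod 4, t g = (g.1 + 2 * g.2, 2 * g.1 - g.2)) :
    ∀ g h : ZMod 4 × ZMod 4,
      (i ^ (g.1.val * h.1.val) * i ^ (g.1.val * h.2.val) * i ^ (g.2.val * h.2.val)) *
        (i ^ ((t g).1.val * (t h).1.val) * i ^ ((t g).1.val * (t h).2.val) *
          i ^ ((t g).2.val * (t h).2.val)) = 1 :=
  alpha_product_case6_antisymmetric_general k i hi t ht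
end

section
/- Let G = Z/4 × Z/4 with generators x, y, i a primitive 4th root of unity, α_{1,2}(x^{a1}y^{a2}, x^{b1}y^{b2}) = i^{a1 b2}, and f : G → G the automorphism with f(x) = xy, f(y) = y. Then for all g, h ∈ G, α_{1,2}²(f(g), f(h)) = α_{1,1}²(g,h) · α_{1,2}²(g,h), i.e. pulling back the cocycle α_{1,2}² along f × f yields α_{1,1}² α_{1,2}². Moreover f commutes with the automorphism t(x) = x^{-1}, t(y) = y^{-1}. -/
/-!
Since `i ^ 4 = 1`, the pairing `(a, b) ↦ i ^ (a.val * b.val)` on `ZMod 4` is a bicharacter. As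
`(f h).2 = h.1 + h.2`, it splits `α_{1,2}(f g, f h)` into `α_{1,1}(g, h) · α_{1,2}(g, h)` already
before squaring.
-/

section PowVal

variable {M : Type*} [Monoid M] {n : ℕ} [NeZero n] {ζ : M}

theorem pow_val_add_of_pow_eq_one (hζ : ζ ^ n = 1) (a b : ZMod n) :
    ζ ^ (a + b).val = ζ ^ a.val * ζ ^ b.val := by
  rw [ZMod.val_add, ← pow_eq_pow_mod _ hζ, pow_add]

theorem pow_val_mul_val_add_of_pow_eq_one (hζ : ζ ^ n = 1) (a b c : ZMod n) :
    ζ ^ (a.val * (b + c).val) = ζ ^ (a.val * b.val) * ζ ^ (a.val * c.val) := by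
  have hζa : (ζ ^ a.val) ^ n = 1 := by rw [pow_right_comm, hζ, one_pow]
  simp only [pow_mul]
  exact pow_val_add_of_pow_eq_one hζa b c

end PowVal

theorem pullback_alpha12_sq_along_f_general
    (k : Type*) [Field k]
    (i : kˣ) (hi : IsPrimitiveRoot i 4)
    (f : ZMod 4 × ZMod 4 → ZMod 4 × ZMod 4)
    (hf : ∀ g : ZMod 4 × ZMod 4, f g = (g.1, g.1 + g.2)) :
    (∀ g h : ZMod 4 × ZMod 4,
        (i ^ ((f g).1.val * (f h).2.val)) ^ 2 =
          (i ^ (g.1.val * h.1.val)) ^ 2 * (i ^ (g.1.val * h.2.val)) ^ 2) ∧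
      (∀ g : ZMod 4 × ZMod 4, f (-g) = -(f g)) := by
  refine ⟨fun g h => ?_, fun g => ?_⟩
  · rw [hf, hf, pow_val_mul_val_add_of_pow_eq_one hi.pow_eq_one, mul_pow]
  · rw [hf, hf, Prod.fst_neg, Prod.snd_neg, Prod.neg_mk, neg_add]

/-- For `G = ℤ/4 × ℤ/4` and the automorphism `f(x) = xy`, `f(y) = y` (i.e.
`f(a,b) = (a, a+b)`), pulling back the cocycle `α_{1,2}²` along `f × f` gives
`α_{1,1}² · α_{1,2}²`; moreover `f` commutes with the inversion automorphism. -/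
theorem pullback_alpha12_sq_along_f
    (k : Type*) [Field k] [CharZero k]
    (i : kˣ) (hi : IsPrimitiveRoot i 4)
    (f : ZMod 4 × ZMod 4 → ZMod 4 × ZMod 4)
    (hf : ∀ g : ZMod 4 × ZMod 4, f g = (g.1, g.1 + g.2)) :
    (∀ g h : ZMod 4 × ZMod 4,
        (i ^ ((f g).1.val * (f h).2.val)) ^ 2 =
          (i ^ (g.1.val * h.1.val)) ^ 2 * (i ^ (g.1.val * h.2.val)) ^ 2) ∧
      (∀ g : ZMod 4 × ZMod 4, f (-g) = -(f g)) :=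
  pullback_alpha12_sq_along_f_general k i hi f hf
end

section
/- Let G = Z/4 × Z/4 with generators x, y, i a primitive 4th root of unity, and t the automorphism t(x) = xy², t(y) = x²y^{-1}. With α_{p,q}(x^{a1}y^{a2},x^{b1}y^{b2}) = i^{a_p b_q}: the pullback of α_{1,2} along t × t equals α_{1,2}^{3} α_{1,1}^{2} α_{2,2}^{2} as functions G × G → k^×, i.e. α_{1,2}(t(g), t(h)) = i^{a1 b2}(−1)^{a1 b2 + a1 b1 + a2 b2} for g = x^{a1}y^{a2}, h = x^{b1}y^{b2}. -/
/-! Since `-1 = i²` and `i` has order 4, both sides are powers of `i`, so it suffices to compare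
exponents in `ZMod 4`, where `(a₁ + 2a₂)(2b₁ - b₂) ≡ 3a₁b₂ + 2a₁b₁ + 2a₂b₂`. -/

lemma IsPrimitiveRoot.pow_eq_pow_of_natCast_eq {M : Type*} [CommMonoid M] {u : M} {n a b : ℕ}
    (hu : IsPrimitiveRoot u n) (h : (a : ZMod n) = b) : u ^ a = u ^ b := by
  rw [ZMod.natCast_eq_natCast_iff', hu.eq_orderOf] at h
  rw [← pow_mod_orderOf, h, pow_mod_orderOf]

lemma IsPrimitiveRoot.units_pow_eq_neg_one {R : Type*} [CommRing R] [NoZeroDivisors R]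
    {u : Rˣ} {n : ℕ} (hn : 0 < n) (hu : IsPrimitiveRoot u (2 * n)) : u ^ n = -1 := by
  have hsq : IsPrimitiveRoot ((u : R) ^ n) 2 :=
    (IsPrimitiveRoot.coe_units_iff.mpr hu).pow (by omega) (mul_comm 2 n)
  exact Units.ext (by simpa using hsq.eq_neg_one_of_two_right)

lemma alpha12_pullback_exponent (a₁ a₂ b₁ b₂ : ZMod 4) :
    (a₁ + 2 * a₂) * (2 * b₁ - b₂) = a₁ * b₂ + 2 * (a₁ * b₂ + a₁ * b₁ + a₂ * b₂) := by
  have h4 : (4 : ZMod 4) = 0 := rfl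
  linear_combination (a₂ * b₁ - a₁ * b₂ - a₂ * b₂) * h4

theorem pullback_alpha12_case6_general
    (k : Type*) [Field k]
    (i : kˣ) (hi : IsPrimitiveRoot i 4)
    (t : ZMod 4 × ZMod 4 → ZMod 4 × ZMod 4)
    (ht : ∀ g : ZMod 4 × ZMod 4, t g = (g.1 + 2 * g.2, 2 * g.1 - g.2)) :
    ∀ g h : ZMod 4 × ZMod 4,
      i ^ ((t g).1.val * (t h).2.val) =
        i ^ (g.1.val * h.2.val) *
          (-1 : kˣ) ^ (g.1.val * h.2.val + g.1.val * h.1.val + g.2.val * h.2.val) := by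
  intro g h
  rw [← hi.units_pow_eq_neg_one two_pos, ← pow_mul, ← pow_add]
  apply hi.pow_eq_pow_of_natCast_eq
  push_cast [ZMod.natCast_val, ZMod.cast_id', ht]
  exact alpha12_pullback_exponent ..

/-- For `G = ℤ/4 × ℤ/4` and `t(x) = xy²`, `t(y) = x²y⁻¹`, the pullback of
`α_{1,2}(g,h) = i^{a₁b₂}` along `t × t` equals `α_{1,2}³ α_{1,1}² α_{2,2}²`, i.e.
`α_{1,2}(t(g),t(h)) = i^{a₁b₂}(-1)^{a₁b₂ + a₁b₁ + a₂b₂}`. -/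
theorem pullback_alpha12_case6
    (k : Type*) [Field k] [CharZero k]
    (i : kˣ) (hi : IsPrimitiveRoot i 4)
    (t : ZMod 4 × ZMod 4 → ZMod 4 × ZMod 4)
    (ht : ∀ g : ZMod 4 × ZMod 4, t g = (g.1 + 2 * g.2, 2 * g.1 - g.2)) :
    ∀ g h : ZMod 4 × ZMod 4,
      i ^ ((t g).1.val * (t h).2.val) =
        i ^ (g.1.val * h.2.val) *
          (-1 : kˣ) ^ (g.1.val * h.2.val + g.1.val * h.1.val + g.2.val * h.2.val) :=
  pullback_alpha12_case6_general k i hi t ht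
end

section
/- Let G = Z/4 × Z/4 with generators x, y, i a primitive 4th root of unity, and f : G → G the automorphism with f(x) = x, f(y) = x²y. Then for all g = x^{a1}y^{a2}, h = x^{b1}y^{b2} in G, α_{1,2}(f(g), f(h)) = i^{a1 b2}(−1)^{a2 b2}, i.e. the pullback of α_{1,2} along f × f equals α_{1,2} · α_{2,2}². Moreover f commutes with the automorphism t(x) = x, t(y) = y^{-1}. -/
/-! Since `i² = -1` and `i⁴ = 1`, the claimed identity says that the exponents
`(a₁ + 2a₂)b₂` and `a₁b₂ + 2a₂b₂` agree modulo 4, which is ring arithmetic in `ℤ/4`.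
Commuting with `t` comes down to `2(-b) = 2b` in `ℤ/4`. -/

theorem IsPrimitiveRoot.units_sq_eq_neg_one {R : Type*} [CommRing R] [NoZeroDivisors R]
    {ζ : Rˣ} (h : IsPrimitiveRoot ζ 4) : ζ ^ 2 = -1 := by
  have h₂ : IsPrimitiveRoot ((ζ : R) ^ 2) 2 :=
    (IsPrimitiveRoot.coe_units_iff.mpr h).pow_of_dvd two_ne_zero (by norm_num)
  exact Units.ext (by push_cast; exact h₂.eq_neg_one_of_two_right)

theorem pullback_alpha12_along_f2_general
    (k : Type*) [Field k]
    (i : kˣ) (hi : IsPrimitiveRoot i 4)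
    (f : ZMod 4 × ZMod 4 → ZMod 4 × ZMod 4)
    (hf : ∀ g : ZMod 4 × ZMod 4, f g = (g.1 + 2 * g.2, g.2)) :
    (∀ g h : ZMod 4 × ZMod 4,
        i ^ ((f g).1.val * (f h).2.val) =
          i ^ (g.1.val * h.2.val) * (-1 : kˣ) ^ (g.2.val * h.2.val)) ∧
      (∀ g : ZMod 4 × ZMod 4, f (g.1, -g.2) = ((f g).1, -(f g).2)) := by
  refine ⟨fun g h => ?_, fun g => ?_⟩
  · rw [hf, hf, ← hi.units_sq_eq_neg_one, ← pow_mul, ← pow_add]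
    refine pow_eq_pow_of_modEq ((ZMod.natCast_eq_natCast_iff _ _ 4).mp ?_) hi.pow_eq_one
    push_cast [ZMod.natCast_val, ZMod.cast_id]
    ring
  · have h4 : (4 : ZMod 4) = 0 := rfl
    rw [hf, hf, Prod.mk.injEq]
    exact ⟨by linear_combination (-g.2) * h4, rfl⟩

/-- For `G = ℤ/4 × ℤ/4` and the automorphism `f(x) = x`, `f(y) = x²y` (i.e.
`f(a,b) = (a + 2b, b)`), pulling back `α_{1,2}` along `f × f` gives `α_{1,2} · α_{2,2}²`,
i.e. `α_{1,2}(f(g),f(h)) = i^{a₁b₂}(-1)^{a₂b₂}`; moreover `f` commutes with the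
automorphism `t(x) = x`, `t(y) = y⁻¹`. -/
theorem pullback_alpha12_along_f2
    (k : Type*) [Field k] [CharZero k]
    (i : kˣ) (hi : IsPrimitiveRoot i 4)
    (f : ZMod 4 × ZMod 4 → ZMod 4 × ZMod 4)
    (hf : ∀ g : ZMod 4 × ZMod 4, f g = (g.1 + 2 * g.2, g.2)) :
    (∀ g h : ZMod 4 × ZMod 4,
        i ^ ((f g).1.val * (f h).2.val) =
          i ^ (g.1.val * h.2.val) * (-1 : kˣ) ^ (g.2.val * h.2.val)) ∧
      (∀ g : ZMod 4 × ZMod 4, f (g.1, -g.2) = ((f g).1, -(f g).2)) :=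
  pullback_alpha12_along_f2_general k i hi f hf
end
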